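/- Let K be a number field, K̄ an algebraic closure of K, and O_K̄ the integral closure of O_K in K̄. Let W^a := W^a_{O_K}(O_K̄) denote the set of automatic elements of W_{O_K}(O_K̄). Then W^a is an O_K-subalgebra of W_{O_K}(O_K̄) (it contains all constant vectors and is closed under addition and multiplication), it is closed under all shift operators ψ_p, and moreover for every ζ ∈ W^a and every p ∈ P_K one has ψ_p ζ − ζ^{#k_p} ∈ p·W^a. In other words, the automatic Witt vectors form a sub-Λ-ring of W_{O_K}(O_K̄). -/

import Mathlib

open NumberField

noncomputable section

/-- The multiplicative monoid `I_K` of nonzero ideals of the ring of integers of `K`. -/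
def IdealMonoid (K : Type) [Field K] [NumberField K] : Submonoid (Ideal (𝓞 K)) where
  carrier := {I | I ≠ ⊥}
  mul_mem' := by
    intro a b ha hb h
    rcases Ideal.mul_eq_bot.mp h with h' | h'
    · exact ha h'
    · exact hb h'
  one_mem' := by
    simp only [Set.mem_setOf_eq, Ideal.one_eq_top]
    exact top_ne_bot

/-- `I_K`, the monoid of nonzero ideals, as a type. -/
abbrev IK (K : Type) [Field K] [NumberField K] := ↥(IdealMonoid K)

/-- `P_K`, the set of nonzero prime ideals of `𝓞 K`, as a type. -/
def PrimeIdeal (K : Type) [Field K] [NumberField K] :=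
  {p : Ideal (𝓞 K) // p.IsPrime ∧ p ≠ ⊥}

/-- A nonzero prime ideal, regarded as an element of `I_K`. -/
def PrimeIdeal.toIK {K : Type} [Field K] [NumberField K] (p : PrimeIdeal K) : IK K :=
  ⟨p.1, p.2.2⟩

/-- `#k_p`: the cardinality of the residue ring `R ⧸ p`. -/
def residueCard {R : Type} [CommRing R] (p : Ideal R) : ℕ :=
  Nat.card (R ⧸ p)

/-- The shift operator `ψ_a` on `A^{I_K}`: `(ψ_a ξ)_b = ξ_{a·b}`. -/
def shift {K : Type} [Field K] [NumberField K] {A : Type} (a : IK K)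
    (ξ : IK K → A) : IK K → A :=
  fun b => ξ (a * b)

/-- For an ideal `p` of `𝓞 K` and a subset `S ⊆ A^{I_K}`, the set `p·S` of all finite
sums of products of elements of `p` with elements of (the module generated by) `S`. -/
def idealMulSet {K : Type} [Field K] [NumberField K] {A : Type} [CommRing A]
    [Algebra (𝓞 K) A] (p : Ideal (𝓞 K)) (S : Set (IK K → A)) : Set (IK K → A) :=
  ↑(p • Submodule.span (𝓞 K) S)

/-- The descending chain `U_n(A)` of subsets of `A^{I_K}`. -/
def UnSet (K : Type) [Field K] [NumberField K] (A : Type) [CommRing A]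
    [Algebra (𝓞 K) A] : ℕ → Set (IK K → A)
  | 0 => Set.univ
  | n + 1 => {ξ | ξ ∈ UnSet K A n ∧ ∀ p : PrimeIdeal K,
      shift p.toIK ξ - ξ ^ residueCard p.1 ∈ idealMulSet p.1 (UnSet K A n)}

/-- The ring of Witt vectors `W_{O_K}(A) = ⋂ₙ U_n(A)`, as a subset of `A^{I_K}`. -/
def WittSet (K : Type) [Field K] [NumberField K] (A : Type) [CommRing A]
    [Algebra (𝓞 K) A] : Set (IK K → A) :=
  ⋂ n, UnSet K A n

/-- A deterministic finite automaton with output, over input alphabet `Δ` and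
output alphabet `O`. -/
structure DFAO (Δ O : Type) : Type 1 where
  State : Type
  [finState : Finite State]
  trans : State → Δ → State
  start : State
  out : State → O

/-- The output of a DFAO on an input word, processing letters from left to right. -/
def DFAO.output {Δ O : Type} (M : DFAO Δ O) (l : List Δ) : O :=
  M.out (l.foldl M.trans M.start)

/-- `ξ ∈ A^{I_K}` is automatic if some DFAO with input alphabet `P_K` and output
alphabet `A` produces `ξ_a` from every word of primes whose product is `a`. -/
def IsAutomatic {K : Type} [Field K] [NumberField K] {A : Type}
    (ξ : IK K → A) : Prop :=
  ∃ M : DFAO (PrimeIdeal K) A, ∀ (l : List (PrimeIdeal K)) (a : IK K),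
    (a : Ideal (𝓞 K)) = (l.map Subtype.val).prod → ξ a = M.output l

/-- `v_p(a)`: the largest `e` such that `p^e` divides `a`. -/
def vIdeal {R : Type} [CommRing R] (p a : Ideal R) : ℕ :=
  sSup {e : ℕ | p ^ e ∣ a}

/-- The set `W^a_{O_K}(A)` of automatic Witt vectors. -/
def AutomaticWittSet (K : Type) [Field K] [NumberField K] (A : Type) [CommRing A]
    [Algebra (𝓞 K) A] : Set (IK K → A) :=
  {ξ | ξ ∈ WittSet K A ∧ IsAutomatic ξ}


/-! Each `U_n` is an `𝓞 K`-subalgebra of `A^{I_K}` stable under the shifts: the congruence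
`ψ_p ξ ≡ ξ ^ #k_p (mod p·U_{n-1})` holds for constants by Fermat's little theorem, passes to
sums because `#k_p` is a power of a prime `ℓ ∈ p`, to products because `ψ_p` is a ring map,
and to shifts because the shifts commute. Automatic sequences are closed under pointwise
operations (product automata) and under shifts (move the start state), so `W^a` is a
shift-stable subalgebra.

For `ζ ∈ W^a` the vector `η = ψ_p ζ - ζ ^ #k_p` lies in `p·U_n` for every `n`, but the
decomposition may depend on `n`. Write `p·b = (a)` with `a ≠ 0`. For `v ∈ b` one has
`v·η ∈ a·U_n`, so `v·η = a·θ_v` with `θ_v ∈ U_n`; by torsion-freeness `θ_v` does not depend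
on `n`, and it is automatic, being a pointwise function of `η`. Writing `a = ∑ uᵢ vᵢ` with
`uᵢ ∈ p` gives `a·η = a·∑ uᵢ θ_{vᵢ}`, hence `η ∈ p·W^a`. -/

section FrobeniusCongruence

variable {R B M : Type} [CommRing R]

theorem Ideal.pow_residueCard_sub_self_mem (p : Ideal R) [p.IsMaximal] [Finite (R ⧸ p)]
    (d : R) : d ^ residueCard p - d ∈ p := by
  let := Ideal.Quotient.field p
  let := Fintype.ofFinite (R ⧸ p)
  rw [← Ideal.Quotient.eq_zero_iff_mem, map_sub, map_pow, residueCard,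
    Nat.card_eq_fintype_card, FiniteField.pow_card, sub_self]

theorem Ideal.exists_prime_residueCard_eq_pow (p : Ideal R) [p.IsMaximal] [Finite (R ⧸ p)] :
    ∃ ℓ f : ℕ, ℓ.Prime ∧ residueCard p = ℓ ^ f ∧ (ℓ : R) ∈ p := by
  let := Ideal.Quotient.field p
  let := Fintype.ofFinite (R ⧸ p)
  obtain ⟨f, hℓ, hcard⟩ := FiniteField.card (R ⧸ p) (ringChar (R ⧸ p))
  refine ⟨ringChar (R ⧸ p), f, hℓ, by rw [residueCard, Nat.card_eq_fintype_card, hcard], ?_⟩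
  rw [← Ideal.Quotient.eq_zero_iff_mem, map_natCast, ringChar.spec]

theorem Submodule.apply_mem_ideal_smul [AddCommMonoid M] [Module R M] {p : Ideal R}
    {N : Submodule R M} (f : M →ₗ[R] M) (hf : ∀ x ∈ N, f x ∈ N) {y : M} (hy : y ∈ p • N) :
    f y ∈ p • N := by
  refine Submodule.smul_mono le_rfl (Submodule.map_le_iff_le_comap.2 hf) ?_
  rw [← Submodule.map_smul'']
  exact Submodule.mem_map_of_mem hy

variable [CommRing B] [Algebra R B]

def FrobeniusCongr (p : Ideal R) (φ : B →ₐ[R] B) (S : Subalgebra R B) (ξ : B) : Prop :=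
  φ ξ - ξ ^ residueCard p ∈ p • Subalgebra.toSubmodule S

variable {p : Ideal R} {φ : B →ₐ[R] B} {S : Subalgebra R B} {ξ η : B}

theorem frobeniusCongr_algebraMap [p.IsMaximal] [Finite (R ⧸ p)] (c : R) :
    FrobeniusCongr p φ S (algebraMap R B c) := by
  have h : φ (algebraMap R B c) - algebraMap R B c ^ residueCard p
      = -(c ^ residueCard p - c) • (1 : B) := by
    rw [AlgHom.commutes, ← map_pow, ← map_sub, Algebra.algebraMap_eq_smul_one, neg_sub]
  rw [FrobeniusCongr, h]
  exact Submodule.smul_mem_smul (p.neg_mem (p.pow_residueCard_sub_self_mem c)) S.one_mem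

theorem FrobeniusCongr.add [p.IsMaximal] [Finite (R ⧸ p)] (hξ : ξ ∈ S) (hη : η ∈ S)
    (hξp : FrobeniusCongr p φ S ξ) (hηp : FrobeniusCongr p φ S η) :
    FrobeniusCongr p φ S (ξ + η) := by
  obtain ⟨ℓ, f, hℓ, hq, hℓp⟩ := p.exists_prime_residueCard_eq_pow
  set c := ∑ k ∈ Finset.Ioo 0 (ℓ ^ f),
    ξ ^ (k - 1) * η ^ (ℓ ^ f - k - 1) * ((ℓ ^ f).choose k / ℓ : ℕ)
  have hc : ξ * η * c ∈ S := S.mul_mem (S.mul_mem hξ hη) (S.sum_mem fun k _ =>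
    S.mul_mem (S.mul_mem (S.pow_mem hξ _) (S.pow_mem hη _)) (S.natCast_mem _))
  -- the mixed binomial terms all carry the factor `ℓ ∈ p`
  have h : φ (ξ + η) - (ξ + η) ^ residueCard p
      = (φ ξ - ξ ^ residueCard p) + (φ η - η ^ residueCard p) - (ℓ : R) • (ξ * η * c) := by
    rw [map_add, hq, add_pow_prime_pow_eq hℓ, Algebra.smul_def, map_natCast]
    ring
  rw [FrobeniusCongr, h]
  exact sub_mem (add_mem hξp hηp) (Submodule.smul_mem_smul hℓp hc)

theorem FrobeniusCongr.mul (hξ : ξ ∈ S) (hφη : φ η ∈ S) (hξp : FrobeniusCongr p φ S ξ)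
    (hηp : FrobeniusCongr p φ S η) : FrobeniusCongr p φ S (ξ * η) := by
  have h : φ (ξ * η) - (ξ * η) ^ residueCard p
      = φ η * (φ ξ - ξ ^ residueCard p) + ξ ^ residueCard p * (φ η - η ^ residueCard p) := by
    rw [map_mul, mul_pow]
    ring
  rw [FrobeniusCongr, h]
  exact add_mem (Submodule.apply_mem_ideal_smul (LinearMap.mulLeft R (φ η))
      (fun _ hx => S.mul_mem hφη hx) hξp)
    (Submodule.apply_mem_ideal_smul (LinearMap.mulLeft R (ξ ^ residueCard p))
      (fun _ hx => S.mul_mem (S.pow_mem hξ _) hx) hηp)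

theorem FrobeniusCongr.map (ψ : B →ₐ[R] B) (hψφ : ψ.comp φ = φ.comp ψ) (hψS : ∀ x ∈ S, ψ x ∈ S)
    (hξp : FrobeniusCongr p φ S ξ) : FrobeniusCongr p φ S (ψ ξ) := by
  have h : φ (ψ ξ) - ψ ξ ^ residueCard p = ψ (φ ξ - ξ ^ residueCard p) := by
    rw [map_sub, map_pow, ← AlgHom.comp_apply, ← hψφ, AlgHom.comp_apply]
  rw [FrobeniusCongr, h]
  exact Submodule.apply_mem_ideal_smul ψ.toLinearMap hψS hξp

end FrobeniusCongruence

section Divisibility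

variable {R M : Type*} [CommRing R] [AddCommGroup M] [Module R M]

theorem Ideal.exists_mul_eq_span_singleton [IsDedekindDomain R] {p : Ideal R} (hp : p ≠ ⊥) :
    ∃ a ≠ (0 : R), ∃ b : Ideal R, p * b = Ideal.span {a} := by
  obtain ⟨a, hap, ha⟩ := Submodule.exists_mem_ne_zero_of_ne_bot hp
  obtain ⟨b, hb⟩ := Ideal.dvd_iff_le.2 ((Ideal.span_singleton_le_iff_mem p).2 hap)
  exact ⟨a, ha, b, hb.symm⟩

variable {p b : Ideal R} {a : R}

theorem Submodule.exists_smul_eq_smul_of_mem_ideal_smul (hpb : p * b = Ideal.span {a})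
    {N : Submodule R M} {η : M} (hη : η ∈ p • N) {v : R} (hv : v ∈ b) :
    ∃ θ ∈ N, a • θ = v • η := by
  have h : v • η ∈ (b * p) • N := by
    rw [Submodule.mul_smul]
    exact Submodule.smul_mem_smul hv hη
  rwa [mul_comm, hpb, Submodule.ideal_span_singleton_smul,
    Submodule.mem_smul_pointwise_iff_exists] at h

theorem Submodule.mem_ideal_smul_of_forall_exists_smul_eq [IsDomain R]
    [Module.IsTorsionFree R M] (ha : a ≠ 0) (hpb : p * b = Ideal.span {a}) (T : Submodule R M)
    {η : M} (h : ∀ v ∈ b, ∃ θ ∈ T, a • θ = v • η) : η ∈ p • T := by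
  have key : ∀ x ∈ p * b, ∃ θ ∈ p • T, a • θ = x • η := by
    intro x hx
    refine Submodule.mul_induction_on hx (fun u hu v hv => ?_) ?_
    · obtain ⟨θ, hθ, e⟩ := h v hv
      exact ⟨u • θ, Submodule.smul_mem_smul hu hθ, by rw [smul_comm, e, smul_smul]⟩
    · rintro x y ⟨θ₁, h₁, e₁⟩ ⟨θ₂, h₂, e₂⟩
      exact ⟨θ₁ + θ₂, add_mem h₁ h₂, by rw [smul_add, e₁, e₂, add_smul]⟩
  obtain ⟨θ, hθ, e⟩ := key a (hpb ▸ Ideal.mem_span_singleton_self a)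
  exact smul_right_injective M ha e ▸ hθ

end Divisibility

variable {K : Type} [Field K] [NumberField K]

instance PrimeIdeal.isMaximal (p : PrimeIdeal K) : p.1.IsMaximal :=
  p.2.1.isMaximal p.2.2

instance PrimeIdeal.finite_quotient (p : PrimeIdeal K) : Finite (𝓞 K ⧸ p.1) :=
  Ideal.finiteQuotientOfFreeOfNeBot p.1 p.2.2

section Automatic

variable {A B C : Type}

theorem isAutomatic_const (v : A) : IsAutomatic (fun _ : IK K => v) :=
  ⟨⟨PUnit, fun s _ => s, PUnit.unit, fun _ => v⟩, fun _ _ _ => rfl⟩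

theorem IsAutomatic.comp {ξ : IK K → A} (hξ : IsAutomatic ξ) (g : A → B) :
    IsAutomatic (g ∘ ξ) := by
  obtain ⟨M, hM⟩ := hξ
  let := M.finState
  exact ⟨⟨M.State, M.trans, M.start, g ∘ M.out⟩, fun l a ha => congrArg g (hM l a ha)⟩

theorem IsAutomatic.map₂ {ξ : IK K → A} {η : IK K → B} (hξ : IsAutomatic ξ)
    (hη : IsAutomatic η) (g : A → B → C) : IsAutomatic (fun a => g (ξ a) (η a)) := by
  obtain ⟨M, hM⟩ := hξ
  obtain ⟨N, hN⟩ := hη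
  let := M.finState
  let := N.finState
  let trans (q : M.State × N.State) (d : PrimeIdeal K) := (M.trans q.1 d, N.trans q.2 d)
  refine ⟨⟨M.State × N.State, trans, (M.start, N.start), fun q => g (M.out q.1) (N.out q.2)⟩,
    fun l a ha => ?_⟩
  show g (ξ a) (η a) = _
  rw [hM l a ha, hN l a ha]
  show _ = g (M.out (l.foldl trans (M.start, N.start)).1)
    (N.out (l.foldl trans (M.start, N.start)).2)
  rw [← List.foldl_hom Prod.fst (g₂ := M.trans) (fun _ _ => rfl),
    ← List.foldl_hom Prod.snd (g₂ := N.trans) (fun _ _ => rfl)]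
  rfl

theorem IsAutomatic.shift {ξ : IK K → A} (hξ : IsAutomatic ξ) (p : PrimeIdeal K) :
    IsAutomatic (shift p.toIK ξ) := by
  obtain ⟨M, hM⟩ := hξ
  let := M.finState
  refine ⟨⟨M.State, M.trans, M.trans M.start p, M.out⟩, fun l a ha => ?_⟩
  have hpa : ((p.toIK * a : IK K) : Ideal (𝓞 K)) = ((p :: l).map Subtype.val).prod := by
    show p.1 * (a : Ideal (𝓞 K)) = p.1 * (l.map Subtype.val).prod
    rw [ha]
  exact hM (p :: l) (p.toIK * a) hpa

theorem IsAutomatic.of_comp_injective {ξ : IK K → A} {f : A → B} (hf : Function.Injective f)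
    (h : IsAutomatic (f ∘ ξ)) : IsAutomatic ξ := by
  have : Nonempty A := ⟨ξ 1⟩
  have hξ : Function.invFun f ∘ (f ∘ ξ) = ξ := by
    funext a
    exact Function.leftInverse_invFun hf (ξ a)
  exact hξ ▸ h.comp (Function.invFun f)

variable (K A) in
def automaticSubalgebra [CommRing A] [Algebra (𝓞 K) A] : Subalgebra (𝓞 K) (IK K → A) where
  carrier := {ξ | IsAutomatic ξ}
  mul_mem' hξ hη := IsAutomatic.map₂ hξ hη (· * ·)
  add_mem' hξ hη := IsAutomatic.map₂ hξ hη (· + ·)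
  algebraMap_mem' c := isAutomatic_const (algebraMap (𝓞 K) A c)

end Automatic

section Witt

variable {A : Type} [CommRing A] [Algebra (𝓞 K) A]

def shiftAlgHom (t : IK K) : (IK K → A) →ₐ[𝓞 K] (IK K → A) where
  toFun := shift t
  map_one' := rfl
  map_mul' _ _ := rfl
  map_zero' := rfl
  map_add' _ _ := rfl
  commutes' _ := rfl

theorem shiftAlgHom_comp_comm (s t : IK K) :
    (shiftAlgHom s).comp (shiftAlgHom t) = ((shiftAlgHom t).comp (shiftAlgHom s) :
      (IK K → A) →ₐ[𝓞 K] (IK K → A)) := by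
  ext ξ b
  exact congrArg ξ (mul_left_comm t s b)

def IsShiftStable (S : Subalgebra (𝓞 K) (IK K → A)) : Prop :=
  ∀ ξ ∈ S, ∀ s : PrimeIdeal K, shift s.toIK ξ ∈ S

/-- The passage from `U_n` to `U_{n+1}`. -/
def frobeniusStep (S : Subalgebra (𝓞 K) (IK K → A)) (hS : IsShiftStable S) :
    Subalgebra (𝓞 K) (IK K → A) where
  carrier := {ξ | ξ ∈ S ∧ ∀ p : PrimeIdeal K, FrobeniusCongr p.1 (shiftAlgHom p.toIK) S ξ}
  mul_mem' := fun ⟨hξ, hξp⟩ ⟨hη, hηp⟩ =>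
    ⟨S.mul_mem hξ hη, fun p => (hξp p).mul (φ := shiftAlgHom p.toIK) hξ (hS _ hη p) (hηp p)⟩
  add_mem' := fun ⟨hξ, hξp⟩ ⟨hη, hηp⟩ =>
    ⟨S.add_mem hξ hη, fun p => (hξp p).add hξ hη (hηp p)⟩
  algebraMap_mem' c := ⟨S.algebraMap_mem c, fun _ => frobeniusCongr_algebraMap c⟩

theorem isShiftStable_frobeniusStep {S : Subalgebra (𝓞 K) (IK K → A)} (hS : IsShiftStable S) :
    IsShiftStable (frobeniusStep S hS) := fun _ ⟨hξ, hξp⟩ s =>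
  ⟨hS _ hξ s, fun p => (hξp p).map (shiftAlgHom s.toIK) (shiftAlgHom_comp_comm _ _) (hS · · s)⟩

theorem exists_subalgebra_coe_eq_unSet (n : ℕ) :
    ∃ S : Subalgebra (𝓞 K) (IK K → A), IsShiftStable S ∧ (S : Set (IK K → A)) = UnSet K A n := by
  induction n with
  | zero => exact ⟨⊤, fun _ _ _ => trivial, Algebra.coe_top⟩
  | succ n ih =>
    obtain ⟨S, hS, hSU⟩ := ih
    refine ⟨frobeniusStep S hS, isShiftStable_frobeniusStep hS, ?_⟩
    rw [UnSet, ← hSU]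
    have hmul (p : Ideal (𝓞 K)) : idealMulSet p (S : Set (IK K → A))
        = ((p • Subalgebra.toSubmodule S : Submodule (𝓞 K) (IK K → A)) : Set (IK K → A)) := by
      rw [idealMulSet, ← Subalgebra.coe_toSubmodule, Submodule.span_eq]
    simp only [hmul]
    rfl

theorem coe_span_unSet (n : ℕ) :
    (Submodule.span (𝓞 K) (UnSet K A n) : Set (IK K → A)) = UnSet K A n := by
  obtain ⟨S, -, hS⟩ := exists_subalgebra_coe_eq_unSet (K := K) (A := A) n
  rw [← hS]
  exact congrArg SetLike.coe (Submodule.span_eq (Subalgebra.toSubmodule S))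

theorem exists_subalgebra_coe_eq_automaticWittSet :
    ∃ T : Subalgebra (𝓞 K) (IK K → A), IsShiftStable T ∧
      (T : Set (IK K → A)) = AutomaticWittSet K A := by
  choose S hS hSU using exists_subalgebra_coe_eq_unSet (K := K) (A := A)
  refine ⟨(⨅ n, S n) ⊓ automaticSubalgebra K A, fun ξ ⟨hξ, hξa⟩ s => ⟨?_, hξa.shift s⟩, ?_⟩
  · exact Algebra.mem_iInf.2 fun n => hS n ξ (Algebra.mem_iInf.1 hξ n) s
  · simp only [Algebra.coe_inf, Algebra.coe_iInf, hSU]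
    rfl

theorem shift_sub_pow_mem_idealMulSet_automaticWittSet [Module.IsTorsionFree (𝓞 K) A]
    {ζ : IK K → A} (hζ : ζ ∈ AutomaticWittSet K A) (p : PrimeIdeal K) :
    shift p.toIK ζ - ζ ^ residueCard p.1 ∈ idealMulSet p.1 (AutomaticWittSet K A) := by
  obtain ⟨a, ha, b, hpb⟩ := Ideal.exists_mul_eq_span_singleton p.2.2
  set η := shift p.toIK ζ - ζ ^ residueCard p.1
  have hη : ∀ n, η ∈ p.1 • Submodule.span (𝓞 K) (UnSet K A n) :=
    fun n => (Set.mem_iInter.1 hζ.1 (n + 1)).2 p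
  have hηa : IsAutomatic η := (automaticSubalgebra K A).sub_mem (hζ.2.shift p)
    ((automaticSubalgebra K A).pow_mem hζ.2 _)
  -- `θ = (v / a) • η` lies in every `U_n`, and is automatic as a pointwise function of `η`
  refine Submodule.mem_ideal_smul_of_forall_exists_smul_eq ha hpb _ fun v hv => ?_
  obtain ⟨θ, -, hθ⟩ := Submodule.exists_smul_eq_smul_of_mem_ideal_smul hpb (hη 0) hv
  refine ⟨θ, Submodule.subset_span ⟨Set.mem_iInter.2 fun n => ?_, ?_⟩, hθ⟩
  · obtain ⟨θn, hθn, e⟩ := Submodule.exists_smul_eq_smul_of_mem_ideal_smul hpb (hη n) hv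
    rw [smul_right_injective _ ha (hθ.trans e.symm), ← coe_span_unSet]
    exact hθn
  · have h : (a • ·) ∘ θ = (v • ·) ∘ η := hθ
    exact IsAutomatic.of_comp_injective (smul_right_injective A ha) (h ▸ hηa.comp (v • ·))

end Witt

/-- the automatic Witt vectors `W^a = W^a_{O_K}(O_K̄)` form a sub-Λ-ring
of `W_{O_K}(O_K̄)`: `W^a` contains all constant vectors (the image of the structure
map), is closed under addition and multiplication, is closed under all shift operators
`ψ_p`, and satisfies `ψ_p ζ - ζ^{#k_p} ∈ p·W^a` for all `ζ ∈ W^a` and `p ∈ P_K`. -/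
theorem automatic_witt_sub_lambda_ring (K : Type) [Field K] [NumberField K] :
    (∀ c : 𝓞 K,
      algebraMap (𝓞 K) (IK K → ↥(integralClosure (𝓞 K) (AlgebraicClosure K))) c ∈
        AutomaticWittSet K ↥(integralClosure (𝓞 K) (AlgebraicClosure K))) ∧
    (∀ ξ η : IK K → ↥(integralClosure (𝓞 K) (AlgebraicClosure K)),
      ξ ∈ AutomaticWittSet K ↥(integralClosure (𝓞 K) (AlgebraicClosure K)) →
      η ∈ AutomaticWittSet K ↥(integralClosure (𝓞 K) (AlgebraicClosure K)) →
      ξ + η ∈ AutomaticWittSet K ↥(integralClosure (𝓞 K) (AlgebraicClosure K)) ∧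
      ξ * η ∈ AutomaticWittSet K ↥(integralClosure (𝓞 K) (AlgebraicClosure K))) ∧
    (∀ ξ : IK K → ↥(integralClosure (𝓞 K) (AlgebraicClosure K)),
      ξ ∈ AutomaticWittSet K ↥(integralClosure (𝓞 K) (AlgebraicClosure K)) →
      ∀ p : PrimeIdeal K,
        shift p.toIK ξ ∈
          AutomaticWittSet K ↥(integralClosure (𝓞 K) (AlgebraicClosure K))) ∧
    (∀ ζ : IK K → ↥(integralClosure (𝓞 K) (AlgebraicClosure K)),
      ζ ∈ AutomaticWittSet K ↥(integralClosure (𝓞 K) (AlgebraicClosure K)) →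
      ∀ p : PrimeIdeal K,
        shift p.toIK ζ - ζ ^ residueCard p.1 ∈
          idealMulSet p.1
            (AutomaticWittSet K ↥(integralClosure (𝓞 K) (AlgebraicClosure K)))) := by
  obtain ⟨T, hTs, hT⟩ := exists_subalgebra_coe_eq_automaticWittSet (K := K)
    (A := ↥(integralClosure (𝓞 K) (AlgebraicClosure K)))
  refine ⟨?_, ?_, ?_, fun ζ hζ p => shift_sub_pow_mem_idealMulSet_automaticWittSet hζ p⟩ <;>
    simp only [← hT, SetLike.mem_coe]
  · exact T.algebraMap_mem
  · exact fun ξ η hξ hη => ⟨T.add_mem hξ hη, T.mul_mem hξ hη⟩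
  · exact hTs

end
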